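/- arXiv:1509.05755 — 5 statements merged into one kernel-verified Lean document; each statement's English description precedes it below -/
import Mathlib

section
/- For all α ∈ [0, 2π], x(α) + y(α) ≥ 4, with equality if and only if α = π. Consequently the line x + y = 4 is tangent to the curve γ at γ(π) = (2,2). -/
open Real

noncomputable def gammaX (α : ℝ) : ℝ := 2 * Real.sin (α/2) - α * Real.cos (α/2)
noncomputable def gammaY (α : ℝ) : ℝ := 2 * Real.sin (α/2) + (2*π - α) * Real.cos (α/2)

noncomputable def gsum (α : ℝ) : ℝ := 4 * Real.sin (α/2) + (2*π - 2*α) * Real.cos (α/2)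

lemma gsum_eq (α : ℝ) : gammaX α + gammaY α = gsum α := by
  unfold gammaX gammaY gsum; ring

lemma gsum_deriv (α : ℝ) : HasDerivAt gsum ((α - π) * Real.sin (α/2)) α := by
  have h1 : HasDerivAt (fun α : ℝ => α/2) (1/2) α := (hasDerivAt_id α).div_const 2
  have hs := (Real.hasDerivAt_sin (α/2)).comp α h1
  have hc := (Real.hasDerivAt_cos (α/2)).comp α h1
  have hg : HasDerivAt gsum (4 * (Real.cos (α/2) * (1/2)) +
      ((0 - 2 * 1) * Real.cos (α/2) + (2*π - 2*α) * (-Real.sin (α/2) * (1/2)))) α := by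
    exact (hs.const_mul 4).add
      (((hasDerivAt_const α (2*π)).sub ((hasDerivAt_id α).const_mul 2)).mul hc)
  convert hg using 1; ring

lemma gsum_pi : gsum π = 4 := by
  unfold gsum
  simp [Real.sin_pi_div_two]

lemma gsum_cont : Continuous gsum := by
  unfold gsum; fun_prop

lemma anti : StrictAntiOn gsum (Set.Icc 0 π) := by
  apply strictAntiOn_of_deriv_neg (convex_Icc 0 π) gsum_cont.continuousOn
  intro x hx
  rw [interior_Icc] at hx
  rw [(gsum_deriv x).deriv]
  have hsin : 0 < Real.sin (x/2) := by
    apply Real.sin_pos_of_pos_of_lt_pi (by linarith [hx.1])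
    have := pi_pos
    linarith [hx.2]
  nlinarith [hx.2]

lemma mono : StrictMonoOn gsum (Set.Icc π (2*π)) := by
  apply strictMonoOn_of_deriv_pos (convex_Icc π (2*π)) gsum_cont.continuousOn
  intro x hx
  rw [interior_Icc] at hx
  rw [(gsum_deriv x).deriv]
  have hsin : 0 < Real.sin (x/2) := by
    apply Real.sin_pos_of_pos_of_lt_pi
    · have := pi_pos; linarith [hx.1]
    · linarith [hx.2]
  nlinarith [hx.1]

lemma key (α : ℝ) (hα : α ∈ Set.Icc (0:ℝ) (2*π)) (hne : α ≠ π) : 4 < gsum α := by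
  obtain ⟨h0, h2⟩ := hα
  rcases lt_or_gt_of_ne hne with h | h
  · have := anti ⟨h0, le_of_lt h⟩ ⟨pi_pos.le, le_refl π⟩ h
    rw [gsum_pi] at this; linarith
  · have := mono ⟨le_refl π, by linarith [pi_pos]⟩ ⟨le_of_lt h, h2⟩ h
    rw [gsum_pi] at this; linarith

theorem stmt3 :
    (∀ α ∈ Set.Icc (0:ℝ) (2*π),
      4 ≤ gammaX α + gammaY α ∧ (gammaX α + gammaY α = 4 ↔ α = π)) ∧
    gammaX π = 2 ∧ gammaY π = 2 := by
  refine ⟨fun α hα => ?_, ?_, ?_⟩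
  · rw [gsum_eq]
    by_cases h : α = π
    · subst h; rw [gsum_pi]; simp
    · have := key α hα h
      exact ⟨this.le, by constructor <;> intro h' <;> [linarith; exact absurd h' h]⟩
  · unfold gammaX; simp [Real.sin_pi_div_two, Real.cos_pi_div_two]
  · unfold gammaY; simp [Real.sin_pi_div_two, Real.cos_pi_div_two]
end

section
/- For all α ∈ [0, 2π], x(α) + 2 y(α) ≥ 3√3, with equality if and only if α = 4π/3. Consequently the line x + 2y = 3√3 is tangent to the curve γ at the point (√3 + 2π/3, √3 − π/3). -/
/-! Along γ one has x' = (α/2) sin(α/2) and y' = -((2π - α)/2) sin(α/2), so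
(x + 2y)' = ((3α - 4π)/2) sin(α/2). Since sin(α/2) > 0 on (0, 2π), the function x + 2y
strictly decreases on [0, 4π/3] and strictly increases on [4π/3, 2π]; its unique minimum is
its value 3√3 at α = 4π/3, where sin(α/2) = √3/2 and cos(α/2) = -1/2. -/

open Real Set

theorem lt_of_hasDerivAt_neg_of_pos {f f' : ℝ → ℝ} {a b c x : ℝ}
    (hf : ∀ y, HasDerivAt f (f' y) y) (hneg : ∀ y ∈ Ioo a c, f' y < 0)
    (hpos : ∀ y ∈ Ioo c b, 0 < f' y) (hx : x ∈ Icc a b) (hxc : x ≠ c) : f c < f x := by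
  have hcont : Continuous f := continuous_iff_continuousAt.2 fun y ↦ (hf y).continuousAt
  rcases hxc.lt_or_gt with hlt | hgt
  · have hanti : StrictAntiOn f (Icc a c) :=
      strictAntiOn_of_hasDerivWithinAt_neg (convex_Icc a c) hcont.continuousOn
        (fun y _ ↦ (hf y).hasDerivWithinAt) (by simpa only [interior_Icc] using hneg)
    exact hanti ⟨hx.1, hlt.le⟩ ⟨hx.1.trans hlt.le, le_rfl⟩ hlt
  · have hmono : StrictMonoOn f (Icc c b) :=
      strictMonoOn_of_hasDerivWithinAt_pos (convex_Icc c b) hcont.continuousOn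
        (fun y _ ↦ (hf y).hasDerivWithinAt) (by simpa only [interior_Icc] using hpos)
    exact hmono ⟨le_rfl, hgt.le.trans hx.2⟩ ⟨hgt.le, hx.2⟩ hgt

theorem hasDerivAt_gammaX (α : ℝ) : HasDerivAt gammaX (α / 2 * sin (α / 2)) α := by
  have hhalf : HasDerivAt (fun β : ℝ ↦ β / 2) (1 / 2) α := (hasDerivAt_id' α).div_const 2
  exact ((hhalf.sin.const_mul 2).sub ((hasDerivAt_id' α).mul hhalf.cos)).congr_deriv (by ring)

theorem hasDerivAt_gammaY (α : ℝ) : HasDerivAt gammaY (-((2 * π - α) / 2 * sin (α / 2))) α := by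
  have hhalf : HasDerivAt (fun β : ℝ ↦ β / 2) (1 / 2) α := (hasDerivAt_id' α).div_const 2
  exact ((hhalf.sin.const_mul 2).add (((hasDerivAt_id' α).const_sub (2 * π)).mul
    hhalf.cos)).congr_deriv (by ring)

theorem hasDerivAt_gammaX_add_two_mul_gammaY (α : ℝ) :
    HasDerivAt (fun β ↦ gammaX β + 2 * gammaY β) ((3 * α - 4 * π) / 2 * sin (α / 2)) α :=
  ((hasDerivAt_gammaX α).add ((hasDerivAt_gammaY α).const_mul 2)).congr_deriv (by ring)

theorem sin_two_mul_pi_div_three : sin (2 * π / 3) = √3 / 2 := by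
  rw [show 2 * π / 3 = π - π / 3 by ring, sin_pi_sub, sin_pi_div_three]

theorem cos_two_mul_pi_div_three : cos (2 * π / 3) = -(1 / 2) := by
  rw [show 2 * π / 3 = π - π / 3 by ring, cos_pi_sub, cos_pi_div_three]

theorem gammaX_four_mul_pi_div_three : gammaX (4 * π / 3) = √3 + 2 * π / 3 := by
  rw [gammaX, show 4 * π / 3 / 2 = 2 * π / 3 by ring, sin_two_mul_pi_div_three,
    cos_two_mul_pi_div_three]
  ring

theorem gammaY_four_mul_pi_div_three : gammaY (4 * π / 3) = √3 - π / 3 := by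
  rw [gammaY, show 4 * π / 3 / 2 = 2 * π / 3 by ring, sin_two_mul_pi_div_three,
    cos_two_mul_pi_div_three]
  ring

theorem gammaX_add_two_mul_gammaY_four_mul_pi_div_three :
    gammaX (4 * π / 3) + 2 * gammaY (4 * π / 3) = 3 * √3 := by
  rw [gammaX_four_mul_pi_div_three, gammaY_four_mul_pi_div_three]
  ring

theorem gammaX_add_two_mul_gammaY_gt {α : ℝ} (hα : α ∈ Icc 0 (2 * π)) (hne : α ≠ 4 * π / 3) :
    3 * √3 < gammaX α + 2 * gammaY α := by
  have hsin : ∀ β ∈ Ioo 0 (2 * π), 0 < sin (β / 2) := fun β hβ ↦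
    sin_pos_of_pos_of_lt_pi (by linarith [hβ.1]) (by linarith [hβ.2])
  rw [← gammaX_add_two_mul_gammaY_four_mul_pi_div_three]
  refine lt_of_hasDerivAt_neg_of_pos hasDerivAt_gammaX_add_two_mul_gammaY
    (fun β hβ ↦ ?_) (fun β hβ ↦ ?_) hα hne
  · exact mul_neg_of_neg_of_pos (by linarith [hβ.2])
      (hsin β ⟨hβ.1, by linarith [hβ.2, pi_pos]⟩)
  · exact mul_pos (by linarith [hβ.1]) (hsin β ⟨by linarith [hβ.1, pi_pos], hβ.2⟩)

theorem stmt4 :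
    (∀ α ∈ Set.Icc (0:ℝ) (2*π),
      3 * Real.sqrt 3 ≤ gammaX α + 2 * gammaY α ∧
      (gammaX α + 2 * gammaY α = 3 * Real.sqrt 3 ↔ α = 4*π/3)) ∧
    gammaX (4*π/3) = Real.sqrt 3 + 2*π/3 ∧ gammaY (4*π/3) = Real.sqrt 3 - π/3 := by
  refine ⟨fun α hα ↦ ?_, gammaX_four_mul_pi_div_three, gammaY_four_mul_pi_div_three⟩
  rcases eq_or_ne α (4 * π / 3) with rfl | hne
  · simp [gammaX_add_two_mul_gammaY_four_mul_pi_div_three]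
  · have hgt := gammaX_add_two_mul_gammaY_gt hα hne
    exact ⟨hgt.le, iff_of_false hgt.ne' hne⟩
end

section
/- The region Ω₀ bounded by the coordinate axes and the curve γ has area π²; equivalently, ∫₀^{2π} (2 sin(α/2) − α cos(α/2)) · ((2π − α)/2) · sin(α/2) dα = π². -/
/-! The half-angle formulas turn the integrand into `(π - α/2) (1 - cos α - (α/2) sin α)`, which
has an elementary primitive (integrate by parts); at `2π` and `0` it takes the values `π² + 1` and `1`. -/

open Real

lemma integrand_eq_half_angle (α : ℝ) :
    (2 * sin (α/2) - α * cos (α/2)) * ((2*π - α)/2) * sin (α/2)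
      = (π - α/2) * (1 - cos α - α/2 * sin α) := by
  have hsin : sin α = 2 * sin (α/2) * cos (α/2) := by
    rw [← sin_two_mul]; ring_nf
  have hcos : cos α = 1 - 2 * sin (α/2)^2 := by
    rw [← cos_two_mul_eq_one_sub]; ring_nf
  rw [hsin, hcos]; ring

lemma hasDerivAt_area_primitive (x : ℝ) :
    HasDerivAt (fun x => π*x - x^2/4 + (x - 3*π/2) * sin x + (1 + (2*π*x - x^2)/4) * cos x)
      ((π - x/2) * (1 - cos x - x/2 * sin x)) x := by
  have hpoly : HasDerivAt (fun x : ℝ => π*x - x^2/4) (π - x/2) x :=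
    (((hasDerivAt_id' x).const_mul π).fun_sub ((hasDerivAt_pow 2 x).div_const 4)).congr_deriv
      (by norm_num; ring)
  have hquad : HasDerivAt (fun x : ℝ => 1 + (2*π*x - x^2)/4) ((π - x)/2) x :=
    ((((hasDerivAt_id' x).const_mul (2*π)).fun_sub (hasDerivAt_pow 2 x)).div_const 4).const_add 1
      |>.congr_deriv (by norm_num; ring)
  refine ((hpoly.fun_add (((hasDerivAt_id' x).sub_const (3*π/2)).fun_mul
    (hasDerivAt_sin x))).fun_add (hquad.fun_mul (hasDerivAt_cos x))).congr_deriv ?_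
  ring

theorem stmt6 :
    ∫ α in (0:ℝ)..(2*π),
      (2 * Real.sin (α/2) - α * Real.cos (α/2)) * ((2*π - α)/2) * Real.sin (α/2)
      = π^2 := by
  simp_rw [integrand_eq_half_angle]
  rw [intervalIntegral.integral_eq_sub_of_hasDerivAt (fun x _ => hasDerivAt_area_primitive x)
    (by apply Continuous.intervalIntegrable; fun_prop)]
  simp only [sin_two_pi, cos_two_pi, sin_zero, cos_zero]
  ring
end

section
/- Let U : [0, 1) → ℝ be smooth with U(0) < 1, U′ > 0, U″ > 0 on (0,1), and U(r) → ∞ as r → 1, and fix 0 < ε < 1. Define f(r) = r √(1 − ε U(r²)) for r ∈ [−√(U⁻¹(1/ε)), √(U⁻¹(1/ε))]. Then f is an odd function, has exactly two critical points r̄ > 0 and −r̄, which are respectively the global maximum and global minimum of f, and f is strictly increasing on (−r̄, r̄). -/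
open Real

theorem stmt10 (U : ℝ → ℝ) (ε b : ℝ)
    (hU : ContDiffOn ℝ (⊤ : ℕ∞) U (Set.Ico 0 1))
    (hU0 : U 0 < 1)
    (hU' : ∀ u ∈ Set.Ioo (0:ℝ) 1, 0 < deriv U u)
    (hU'' : ∀ u ∈ Set.Ioo (0:ℝ) 1, 0 < deriv (deriv U) u)
    (hUtop : Filter.Tendsto U (nhdsWithin 1 (Set.Iio 1)) Filter.atTop)
    (hε : 0 < ε) (hε1 : ε < 1)
    (hb : b ∈ Set.Ioo (0:ℝ) 1) (hUb : U b = 1/ε)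
    (f : ℝ → ℝ) (hf : ∀ r, f r = r * Real.sqrt (1 - ε * U (r^2))) :
    (∀ r, f (-r) = - f r) ∧
    ∃ rbar ∈ Set.Ioo 0 (Real.sqrt b),
      deriv f rbar = 0 ∧ deriv f (-rbar) = 0 ∧
      (∀ r ∈ Set.Ioo (-Real.sqrt b) (Real.sqrt b),
        deriv f r = 0 → r = rbar ∨ r = -rbar) ∧
      (∀ r ∈ Set.Icc (-Real.sqrt b) (Real.sqrt b), f r ≤ f rbar) ∧
      (∀ r ∈ Set.Icc (-Real.sqrt b) (Real.sqrt b), f (-rbar) ≤ f r) ∧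
      StrictMonoOn f (Set.Ioo (-rbar) rbar) := by
  obtain ⟨hb0, hb1⟩ := hb
  have hodd : ∀ r, f (-r) = - f r := by
    intro r; rw [hf, hf, neg_sq]; ring
  have hUc : ContinuousOn U (Set.Ico 0 1) := hU.continuousOn
  have hUdiff : ∀ u ∈ Set.Ioo (0:ℝ) 1, DifferentiableAt ℝ U u := by
    intro u hu
    have := (hU.differentiableOn (by simp)) u (Set.Ioo_subset_Ico_self hu)
    exact this.differentiableAt
      (Filter.mem_of_superset (isOpen_Ioo.mem_nhds hu) Set.Ioo_subset_Ico_self)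
  have hUmono : StrictMonoOn U (Set.Ico 0 1) := by
    apply strictMonoOn_of_deriv_pos (convex_Ico 0 1) hUc
    rw [interior_Ico]; exact hU'
  have hU'cont : ContinuousOn (deriv U) (Set.Ioo 0 1) :=
    (hU.mono Set.Ioo_subset_Ico_self).continuousOn_deriv_of_isOpen isOpen_Ioo (by simp)
  have hU'mono : StrictMonoOn (deriv U) (Set.Ioo 0 1) := by
    apply strictMonoOn_of_deriv_pos (convex_Ioo 0 1) hU'cont
    rw [interior_Ioo]; exact hU''
  set φ : ℝ → ℝ := fun u => 1 - ε * U u - ε * u * deriv U u with hφdef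
  have hφanti : StrictAntiOn φ (Set.Ioc 0 b) := by
    intro x hx y hy hxy
    have hx1 : x ∈ Set.Ioo (0:ℝ) 1 := ⟨hx.1, lt_of_le_of_lt hx.2 hb1⟩
    have hy1 : y ∈ Set.Ioo (0:ℝ) 1 := ⟨hy.1, lt_of_le_of_lt hy.2 hb1⟩
    have h1 : U x < U y := hUmono ⟨le_of_lt hx1.1, hx1.2⟩ ⟨le_of_lt hy1.1, hy1.2⟩ hxy
    have h2 : deriv U x < deriv U y := hU'mono hx1 hy1 hxy
    have h3 : 0 < deriv U x := hU' x hx1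
    have h4 : 0 < deriv U y := lt_trans h3 h2
    simp only [hφdef]
    nlinarith [mul_pos hε (sub_pos.2 h1), mul_pos (mul_pos hε hx.1) (sub_pos.2 h2),
      mul_pos (mul_pos hε (sub_pos.2 hxy)) h4]
  have hL : 0 < 1 - ε * U 0 := by nlinarith [mul_pos hε (by linarith : (0:ℝ) < 1 - U 0)]
  -- U is continuous at 0 from the right
  have hUcont0 : ContinuousWithinAt U (Set.Ico 0 1) 0 := hUc 0 ⟨le_refl 0, one_pos⟩
  have hle : nhdsWithin (0:ℝ) (Set.Ioi 0) ≤ nhdsWithin 0 (Set.Ico 0 1) := by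
    rw [nhdsWithin_le_iff]
    have h1 : Set.Ioi (0:ℝ) ∩ Set.Iio 1 ∈ nhdsWithin (0:ℝ) (Set.Ioi 0) :=
      Filter.inter_mem self_mem_nhdsWithin
        (mem_nhdsWithin_of_mem_nhds (Iio_mem_nhds one_pos))
    exact Filter.mem_of_superset h1 (fun x hx => ⟨le_of_lt hx.1, hx.2⟩)
  -- find u₀ with φ u₀ > 0
  have hexu0 : ∃ u₀ ∈ Set.Ioo (0:ℝ) b, 0 < φ u₀ := by
    have htend : Filter.Tendsto (fun u => 1 - ε * U u - ε * u * deriv U b)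
        (nhdsWithin (0:ℝ) (Set.Ioi 0)) (nhds (1 - ε * U 0 - ε * 0 * deriv U b)) := by
      apply Filter.Tendsto.sub
      · exact Filter.Tendsto.sub tendsto_const_nhds
          ((hUcont0.mono_left hle).const_mul ε)
      · exact ((Filter.tendsto_id.mono_left nhdsWithin_le_nhds).const_mul ε).mul
          tendsto_const_nhds
    have hLpos : (0:ℝ) < 1 - ε * U 0 - ε * 0 * deriv U b := by
      simpa using hL
    have hev1 : ∀ᶠ u in nhdsWithin (0:ℝ) (Set.Ioi 0),
        0 < 1 - ε * U u - ε * u * deriv U b := htend.eventually (eventually_gt_nhds hLpos)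
    have hev2 : ∀ᶠ u in nhdsWithin (0:ℝ) (Set.Ioi 0), u ∈ Set.Ioo (0:ℝ) b := by
      have : Set.Ioi (0:ℝ) ∩ Set.Iio b ∈ nhdsWithin (0:ℝ) (Set.Ioi 0) :=
        Filter.inter_mem self_mem_nhdsWithin
          (mem_nhdsWithin_of_mem_nhds (Iio_mem_nhds hb0))
      exact Filter.eventually_of_mem this (fun x hx => ⟨hx.1, hx.2⟩)
    obtain ⟨u₀, h1, h2⟩ := (hev1.and hev2).exists
    refine ⟨u₀, h2, ?_⟩
    have hu1 : u₀ ∈ Set.Ioo (0:ℝ) 1 := ⟨h2.1, lt_trans h2.2 hb1⟩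
    have : deriv U u₀ < deriv U b := hU'mono hu1 ⟨hb0, hb1⟩ h2.2
    simp only [hφdef]
    nlinarith [mul_pos (mul_pos hε h2.1) (sub_pos.2 this)]
  obtain ⟨u₀, hu₀, hφu₀⟩ := hexu0
  have hεUb : ε * U b = 1 := by rw [hUb]; field_simp
  have hφb : φ b < 0 := by
    have := hU' b ⟨hb0, hb1⟩
    simp only [hφdef]
    nlinarith [mul_pos (mul_pos hε hb0) this]
  -- IVT gives the zero ubar of φ
  have hsubIoo : Set.Icc u₀ b ⊆ Set.Ioo (0:ℝ) 1 :=
    fun x hx => ⟨lt_of_lt_of_le hu₀.1 hx.1, lt_of_le_of_lt hx.2 hb1⟩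
  have hφcont : ContinuousOn φ (Set.Icc u₀ b) := by
    apply ContinuousOn.sub
    · exact continuousOn_const.sub (continuousOn_const.mul
        (hUc.mono (hsubIoo.trans Set.Ioo_subset_Ico_self)))
    · exact (continuousOn_const.mul continuousOn_id).mul (hU'cont.mono hsubIoo)
  obtain ⟨ubar, hubarmem, hφubar⟩ :=
    intermediate_value_Ioo' (le_of_lt hu₀.2) hφcont ⟨hφb, hφu₀⟩
  have hubar : ubar ∈ Set.Ioo (0:ℝ) b := ⟨lt_trans hu₀.1 hubarmem.1, hubarmem.2⟩
  set rbar := Real.sqrt ubar with hrbardef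
  have hrbarpos : 0 < rbar := Real.sqrt_pos.2 hubar.1
  have hrbarlt : rbar < Real.sqrt b := Real.sqrt_lt_sqrt (le_of_lt hubar.1) hubar.2
  have hrbarsq : rbar ^ 2 = ubar := Real.sq_sqrt (le_of_lt hubar.1)
  -- positivity of the argument of sqrt
  have hpos : ∀ r : ℝ, r ^ 2 < b → 0 < 1 - ε * U (r ^ 2) := by
    intro r hr
    have h1 : U (r ^ 2) < U b :=
      hUmono ⟨sq_nonneg r, lt_trans hr hb1⟩ ⟨le_of_lt hb0, hb1⟩ hr
    nlinarith [mul_lt_mul_of_pos_left h1 hε, hεUb]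
  -- derivative formula away from zero
  have hderiv : ∀ r : ℝ, r ≠ 0 → r ^ 2 < b →
      HasDerivAt f (φ (r ^ 2) / Real.sqrt (1 - ε * U (r ^ 2))) r := by
    intro r hr0 hrb
    have hr2 : r ^ 2 ∈ Set.Ioo (0:ℝ) 1 :=
      ⟨by positivity, lt_trans hrb hb1⟩
    have hsq : HasDerivAt (fun r : ℝ => r ^ 2) (2 * r) r := by
      simpa using hasDerivAt_pow 2 r
    have hU2 : HasDerivAt (fun r : ℝ => U (r ^ 2)) (deriv U (r ^ 2) * (2 * r)) r := by
      have h := HasDerivAt.comp (h₂ := U) (h := fun r : ℝ => r ^ 2) r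
        (hUdiff _ hr2).hasDerivAt hsq
      exact h
    have hin : HasDerivAt (fun r => 1 - ε * U (r ^ 2))
        (0 - ε * (deriv U (r ^ 2) * (2 * r))) r :=
      (hasDerivAt_const _ _).sub (hU2.const_mul ε)
    have hs := hpos r hrb
    have hsqrt := hin.sqrt (ne_of_gt hs)
    have hmul := (hasDerivAt_id r).mul hsqrt
    have heq : f = fun r => r * Real.sqrt (1 - ε * U (r ^ 2)) := funext hf
    rw [heq]
    convert hmul using 1
    case e'_4 | e'_5 | e'_8 => rfl
    have hS : Real.sqrt (1 - ε * U (r ^ 2)) ≠ 0 := ne_of_gt (Real.sqrt_pos.2 hs)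
    have hSS : Real.sqrt (1 - ε * U (r ^ 2)) * Real.sqrt (1 - ε * U (r ^ 2))
        = 1 - ε * U (r ^ 2) := Real.mul_self_sqrt hs.le
    simp only [hφdef, id_eq]
    field_simp
    linear_combination (-2) * hSS
  -- derivative at zero
  have hderiv0 : HasDerivAt f (Real.sqrt (1 - ε * U 0)) 0 := by
    rw [hasDerivAt_iff_tendsto_slope]
    have hev : ∀ᶠ r in nhdsWithin (0:ℝ) {(0:ℝ)}ᶜ,
        slope f 0 r = Real.sqrt (1 - ε * U (r ^ 2)) := by
      filter_upwards [self_mem_nhdsWithin] with r hr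
      have hr0 : r ≠ 0 := hr
      rw [slope_def_field, hf, hf]
      field_simp
      ring
    rw [Filter.tendsto_congr' hev]
    have h2 : Filter.Tendsto (fun r : ℝ => r ^ 2) (nhdsWithin (0:ℝ) {(0:ℝ)}ᶜ)
        (nhdsWithin (0:ℝ) (Set.Ico 0 1)) := by
      rw [tendsto_nhdsWithin_iff]
      constructor
      · have : Filter.Tendsto (fun r : ℝ => r ^ 2) (nhds 0) (nhds 0) := by
          simpa using (continuous_pow 2).tendsto (0:ℝ)
        exact this.mono_left nhdsWithin_le_nhds
      · have hmem : Set.Ioo (-1:ℝ) 1 ∈ nhdsWithin (0:ℝ) {(0:ℝ)}ᶜ :=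
          mem_nhdsWithin_of_mem_nhds (Ioo_mem_nhds (by norm_num) (by norm_num))
        filter_upwards [hmem] with r hr
        constructor
        · positivity
        · nlinarith [hr.1, hr.2]
    have : Filter.Tendsto (fun r : ℝ => 1 - ε * U (r ^ 2))
        (nhdsWithin (0:ℝ) {(0:ℝ)}ᶜ) (nhds (1 - ε * U 0)) := by
      have hcomp : Filter.Tendsto (fun r : ℝ => U (r ^ 2))
          (nhdsWithin (0:ℝ) {(0:ℝ)}ᶜ) (nhds (U 0)) := hUcont0.tendsto.comp h2
      exact Filter.Tendsto.sub tendsto_const_nhds (hcomp.const_mul ε)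
    exact (Real.continuous_sqrt.tendsto _).comp this
  -- r² < b for r in the open interval
  have hsqlt : ∀ r : ℝ, r ∈ Set.Ioo (-Real.sqrt b) (Real.sqrt b) → r ^ 2 < b := by
    intro r hr
    have := sq_lt_sq' hr.1 hr.2
    rwa [Real.sq_sqrt hb0.le] at this
  have hsqle : ∀ r : ℝ, r ∈ Set.Icc (-Real.sqrt b) (Real.sqrt b) → r ^ 2 ≤ b := by
    intro r hr
    have := sq_le_sq' hr.1 hr.2
    rwa [Real.sq_sqrt hb0.le] at this
  -- deriv f values
  have hdf : ∀ r : ℝ, r ≠ 0 → r ^ 2 < b →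
      deriv f r = φ (r ^ 2) / Real.sqrt (1 - ε * U (r ^ 2)) :=
    fun r h1 h2 => (hderiv r h1 h2).deriv
  have hdf0 : deriv f 0 = Real.sqrt (1 - ε * U 0) := hderiv0.deriv
  have hdfrbar : deriv f rbar = 0 := by
    rw [hdf rbar (ne_of_gt hrbarpos) (by rw [hrbarsq]; exact hubar.2), hrbarsq, hφubar,
      zero_div]
  have hdfnrbar : deriv f (-rbar) = 0 := by
    have h1 : (-rbar : ℝ) ^ 2 = ubar := by rw [neg_sq]; exact hrbarsq
    rw [hdf (-rbar) (neg_ne_zero.2 (ne_of_gt hrbarpos)) (by rw [h1]; exact hubar.2), h1,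
      hφubar, zero_div]
  -- the auxiliary function g
  set g : ℝ → ℝ := fun u => u * (1 - ε * U u) with hgdef
  have hgderiv : ∀ u ∈ Set.Ioo (0:ℝ) 1, HasDerivAt g (φ u) u := by
    intro u hu
    have h1 : HasDerivAt (fun u => 1 - ε * U u) (0 - ε * deriv U u) u :=
      (hasDerivAt_const _ _).sub (((hUdiff u hu).hasDerivAt).const_mul ε)
    have h2 := (hasDerivAt_id u).mul h1
    have h3 : HasDerivAt g (1 * (1 - ε * U u) + id u * (0 - ε * deriv U u)) u := h2
    convert h3 using 1
    simp only [hφdef, id_eq]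
    ring
  have hIccsub : Set.Icc (0:ℝ) b ⊆ Set.Ico 0 1 :=
    fun x hx => ⟨hx.1, lt_of_le_of_lt hx.2 hb1⟩
  have hgcont : ContinuousOn g (Set.Icc 0 b) :=
    continuousOn_id.mul (continuousOn_const.sub (continuousOn_const.mul (hUc.mono hIccsub)))
  have hgmax : ∀ u ∈ Set.Icc (0:ℝ) b, g u ≤ g ubar := by
    have hmono : MonotoneOn g (Set.Icc 0 ubar) := by
      apply StrictMonoOn.monotoneOn
      apply strictMonoOn_of_deriv_pos (convex_Icc _ _)
        (hgcont.mono (Set.Icc_subset_Icc_right hubar.2.le))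
      rw [interior_Icc]
      intro u hu
      have hu1 : u ∈ Set.Ioo (0:ℝ) 1 := ⟨hu.1, lt_trans (lt_trans hu.2 hubar.2) hb1⟩
      rw [(hgderiv u hu1).deriv]
      have : φ ubar < φ u :=
        hφanti ⟨hu.1, le_of_lt (lt_trans hu.2 hubar.2)⟩ ⟨hubar.1, hubar.2.le⟩ hu.2
      rw [hφubar] at this; exact this
    have hanti : AntitoneOn g (Set.Icc ubar b) := by
      apply StrictAntiOn.antitoneOn
      apply strictAntiOn_of_deriv_neg (convex_Icc _ _)
        (hgcont.mono (Set.Icc_subset_Icc_left hubar.1.le))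
      rw [interior_Icc]
      intro u hu
      have hu1 : u ∈ Set.Ioo (0:ℝ) 1 := ⟨lt_trans hubar.1 hu.1, lt_trans hu.2 hb1⟩
      rw [(hgderiv u hu1).deriv]
      have : φ u < φ ubar :=
        hφanti ⟨hubar.1, hubar.2.le⟩ ⟨lt_trans hubar.1 hu.1, hu.2.le⟩ hu.1
      rw [hφubar] at this; exact this
    intro u hu
    rcases le_total u ubar with h | h
    · exact hmono ⟨hu.1, h⟩ ⟨hubar.1.le, le_refl _⟩ h
    · exact hanti ⟨le_refl _, hubar.2.le⟩ ⟨h, hu.2⟩ h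
  have hfval : ∀ r : ℝ, 0 ≤ r → f r = Real.sqrt (g (r ^ 2)) := by
    intro r hr
    rw [hf]
    show r * Real.sqrt (1 - ε * U (r ^ 2)) = Real.sqrt (r ^ 2 * (1 - ε * U (r ^ 2)))
    rw [Real.sqrt_mul (sq_nonneg r), Real.sqrt_sq hr]
  have hfrbar : f rbar = Real.sqrt (g ubar) := by
    rw [hfval rbar hrbarpos.le, hrbarsq]
  have hmax : ∀ r ∈ Set.Icc (-Real.sqrt b) (Real.sqrt b), f r ≤ f rbar := by
    intro r hr
    rcases le_or_gt 0 r with h | h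
    · rw [hfval r h, hfrbar]
      exact Real.sqrt_le_sqrt (hgmax _ ⟨sq_nonneg r, hsqle r hr⟩)
    · have h1 : f r ≤ 0 := by
        rw [hf]
        have := Real.sqrt_nonneg (1 - ε * U (r ^ 2))
        nlinarith
      have h2 : (0:ℝ) ≤ f rbar := by rw [hfrbar]; exact Real.sqrt_nonneg _
      linarith
  have hmin : ∀ r ∈ Set.Icc (-Real.sqrt b) (Real.sqrt b), f (-rbar) ≤ f r := by
    intro r hr
    have h1 : f (-r) ≤ f rbar := hmax (-r) ⟨by linarith [hr.2], by linarith [hr.1]⟩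
    rw [hodd r] at h1
    rw [hodd rbar]
    linarith
  have huniq : ∀ r ∈ Set.Ioo (-Real.sqrt b) (Real.sqrt b),
      deriv f r = 0 → r = rbar ∨ r = -rbar := by
    intro r hr hdr
    by_cases h0 : r = 0
    · exfalso
      rw [h0, hdf0] at hdr
      exact absurd hdr (ne_of_gt (Real.sqrt_pos.2 hL))
    · have hb2 := hsqlt r hr
      rw [hdf r h0 hb2] at hdr
      have hS : Real.sqrt (1 - ε * U (r ^ 2)) ≠ 0 := ne_of_gt (Real.sqrt_pos.2 (hpos r hb2))
      have hnum : φ (r ^ 2) = 0 := by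
        rcases div_eq_zero_iff.1 hdr with h | h
        · exact h
        · exact absurd h hS
      have hr2mem : r ^ 2 ∈ Set.Ioc (0:ℝ) b :=
        ⟨lt_of_le_of_ne (sq_nonneg r) (Ne.symm (pow_ne_zero 2 h0)), hb2.le⟩
      have hueq : r ^ 2 = ubar :=
        hφanti.injOn hr2mem ⟨hubar.1, hubar.2.le⟩ (by rw [hnum, hφubar])
      have hzero : (r - rbar) * (r + rbar) = 0 := by nlinarith [hrbarsq, hueq]
      rcases mul_eq_zero.1 hzero with h | h
      · left; linarith
      · right; linarith
  have hstrict : StrictMonoOn f (Set.Ioo (-rbar) rbar) := by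
    have hsub : Set.Ioo (-rbar) rbar ⊆ Set.Ioo (-Real.sqrt b) (Real.sqrt b) :=
      fun x hx => ⟨lt_of_lt_of_le (neg_lt_neg hrbarlt) hx.1.le |>.trans_le (le_refl _) |>.trans_le (le_refl _) |> fun h => h, lt_trans hx.2 hrbarlt⟩
    apply strictMonoOn_of_deriv_pos (convex_Ioo _ _)
    · intro x hx
      have hxb := hsub hx
      by_cases h0 : x = 0
      · rw [h0]
        exact hderiv0.differentiableAt.continuousAt.continuousWithinAt
      · exact (hderiv x h0 (hsqlt x hxb)).differentiableAt.continuousAt.continuousWithinAt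
    · rw [interior_Ioo]
      intro x hx
      have hxb := hsub hx
      by_cases h0 : x = 0
      · rw [h0, hdf0]
        exact Real.sqrt_pos.2 hL
      · rw [hdf x h0 (hsqlt x hxb)]
        apply div_pos
        · have hx2 : x ^ 2 < ubar := by
            rw [← hrbarsq]; exact sq_lt_sq' hx.1 hx.2
          have : φ ubar < φ (x ^ 2) :=
            hφanti ⟨lt_of_le_of_ne (sq_nonneg x) (Ne.symm (pow_ne_zero 2 h0)),
              le_of_lt (lt_of_lt_of_le hx2 hubar.2.le)⟩ ⟨hubar.1, hubar.2.le⟩ hx2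
          rw [hφubar] at this; exact this
        · exact Real.sqrt_pos.2 (hpos x (hsqlt x hxb))
  exact ⟨hodd, rbar, ⟨hrbarpos, hrbarlt⟩, hdfrbar, hdfnrbar, huniq, hmax, hmin, hstrict⟩
end

section
/- Let q : ℝ → ℝ² be a solution of q̈(t) = −ε U′(|q(t)|²) q(t) (with U smooth and ε > 0), and suppose t₁ satisfies q(t₁)·q̇(t₁) = 0 and q(t₁) ≠ 0. Then the solution is symmetric under reflection about the line through 0 spanned by q(t₁): for all t, q(2t₁ − t) = S q(t), where S is the orthogonal reflection of ℝ² fixing q(t₁). -/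
open Real Set Metric

private lemma ode_unique_global {E : Type*} [NormedAddCommGroup E] [NormedSpace ℝ E]
    {v : E → E} (hv : ∀ x : E, ∃ K : NNReal, ∃ s ∈ nhds x, LipschitzOnWith K v s)
    {f g : ℝ → E} (hf : ∀ t, HasDerivAt f (v (f t)) t) (hg : ∀ t, HasDerivAt g (v (g t)) t)
    {t₀ : ℝ} (heq : f t₀ = g t₀) : ∀ t, f t = g t := by
  have hZ : {t : ℝ | f t = g t} = univ := by
    apply IsClopen.eq_univ
    · constructor
      · exact isClosed_eq (continuous_iff_continuousAt.2 fun t => (hf t).continuousAt)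
          (continuous_iff_continuousAt.2 fun t => (hg t).continuousAt)
      · rw [isOpen_iff_mem_nhds]
        intro t₂ ht₂
        obtain ⟨K, s, hs, hK⟩ := hv (f t₂)
        obtain ⟨r, hr, hball⟩ := Metric.mem_nhds_iff.mp hs
        have h1 : ∀ᶠ t in nhds t₂, HasDerivAt f ((fun _ (x : E) => v x) t (f t)) t ∧
            f t ∈ ball (f t₂) r :=
          ((hf t₂).continuousAt.eventually_mem (ball_mem_nhds _ hr)).mono
            fun t ht => ⟨hf t, ht⟩
        have h2 : ∀ᶠ t in nhds t₂, HasDerivAt g ((fun _ (x : E) => v x) t (g t)) t ∧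
            g t ∈ ball (f t₂) r := by
          have : g t₂ = f t₂ := ht₂.symm
          exact ((hg t₂).continuousAt.eventually_mem (this ▸ ball_mem_nhds _ hr)).mono
            fun t ht => ⟨hg t, ht⟩
        exact ODE_solution_unique_of_eventually (Filter.Eventually.of_forall fun _ => hK.mono hball) h1 h2 ht₂
    · exact ⟨t₀, heq⟩
  intro t
  have : t ∈ {t : ℝ | f t = g t} := hZ ▸ mem_univ t
  exact this

theorem stmt12 (U : ℝ → ℝ) (ε : ℝ) (q q' : ℝ → ℝ × ℝ) (t₁ : ℝ)
    (hU : ContDiff ℝ (⊤ : ℕ∞) U)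
    (hε : 0 < ε)
    (hq : ∀ t, HasDerivAt q (q' t) t)
    (hq' : ∀ t, HasDerivAt q' (-(ε * deriv U ((q t).1^2 + (q t).2^2)) • q t) t)
    (horth : (q t₁).1 * (q' t₁).1 + (q t₁).2 * (q' t₁).2 = 0)
    (hne : q t₁ ≠ 0) :
    ∀ t, q (2*t₁ - t) =
      (2 * (((q t).1 * (q t₁).1 + (q t).2 * (q t₁).2) /
        ((q t₁).1^2 + (q t₁).2^2))) • q t₁ - q t := by
  set a : ℝ × ℝ := q t₁ with ha
  set d : ℝ := a.1 ^ 2 + a.2 ^ 2 with hdd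
  have hd : d ≠ 0 := by
    intro h
    apply hne
    have h1 : a.1 = 0 := by nlinarith [sq_nonneg a.1, sq_nonneg a.2]
    have h2 : a.2 = 0 := by nlinarith [sq_nonneg a.1, sq_nonneg a.2]
    exact Prod.ext h1 h2
  set S : ℝ × ℝ → ℝ × ℝ := fun y => (2 * ((y.1 * a.1 + y.2 * a.2) / d)) • a - y with hS
  -- basic algebraic properties of S
  have hSnorm : ∀ y : ℝ × ℝ, (S y).1 ^ 2 + (S y).2 ^ 2 = y.1 ^ 2 + y.2 ^ 2 := by
    intro y
    simp only [hS, Prod.smul_def, Prod.sub_def, smul_eq_mul]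
    field_simp
    ring
  have hSsmul : ∀ (r : ℝ) (y : ℝ × ℝ), S (r • y) = r • S y := by
    intro r y
    simp only [hS, Prod.smul_def, smul_eq_mul]
    apply Prod.ext <;> · simp; field_simp
  -- derivative of S ∘ h
  have hSderiv : ∀ (h : ℝ → ℝ × ℝ) (h' : ℝ × ℝ) (t : ℝ), HasDerivAt h h' t →
      HasDerivAt (fun t => S (h t)) (S h') t := by
    intro h h' t hh
    have h1 : HasDerivAt (fun t => (h t).1) h'.1 t := by
      exact (ContinuousLinearMap.fst ℝ ℝ ℝ).hasFDerivAt.comp_hasDerivAt t hh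
    have h2 : HasDerivAt (fun t => (h t).2) h'.2 t := by
      exact (ContinuousLinearMap.snd ℝ ℝ ℝ).hasFDerivAt.comp_hasDerivAt t hh
    have hc : HasDerivAt (fun t => 2 * (((h t).1 * a.1 + (h t).2 * a.2) / d))
        (2 * ((h'.1 * a.1 + h'.2 * a.2) / d)) t := by
      have := (((h1.mul_const a.1).add (h2.mul_const a.2)).div_const d).const_mul 2
      simpa using this
    exact (hc.smul_const a).sub hh
  -- the vector field
  set cfun : ℝ × ℝ → ℝ := fun x => -(ε * deriv U (x.1 ^ 2 + x.2 ^ 2)) with hcfun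
  set v : (ℝ × ℝ) × ℝ × ℝ → (ℝ × ℝ) × ℝ × ℝ := fun z => (z.2, cfun z.1 • z.1) with hv
  have hvC : ContDiff ℝ 1 v := by
    have hdU : ContDiff ℝ ((⊤ : ℕ∞) : WithTop ℕ∞) (deriv U) :=
      (contDiff_infty_iff_deriv.mp (hU.of_le (by simp))).2
    have hsq : ContDiff ℝ ((⊤ : ℕ∞) : WithTop ℕ∞) (fun x : ℝ × ℝ => x.1 ^ 2 + x.2 ^ 2) :=
      (contDiff_fst.pow 2).add (contDiff_snd.pow 2)
    have hc : ContDiff ℝ ((⊤ : ℕ∞) : WithTop ℕ∞) cfun := ((hdU.comp hsq).const_smul ε).neg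
    have : ContDiff ℝ ((⊤ : ℕ∞) : WithTop ℕ∞) v :=
      contDiff_snd.prodMk ((hc.comp contDiff_fst).smul contDiff_fst)
    exact this.of_le (by exact_mod_cast le_top)
  have hvlip : ∀ x : (ℝ × ℝ) × ℝ × ℝ, ∃ K : NNReal, ∃ s ∈ nhds x, LipschitzOnWith K v s :=
    fun x => hvC.contDiffAt.exists_lipschitzOnWith
  -- the two solutions
  set F : ℝ → (ℝ × ℝ) × ℝ × ℝ := fun t => (q t, q' t) with hF
  set G : ℝ → (ℝ × ℝ) × ℝ × ℝ := fun t => (S (q (2 * t₁ - t)), -(S (q' (2 * t₁ - t)))) with hG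
  have hu : ∀ t : ℝ, HasDerivAt (fun t : ℝ => 2 * t₁ - t) (-1) t := fun t => by
    simpa using (hasDerivAt_id t).const_sub (2 * t₁)
  have hqr : ∀ t, HasDerivAt (fun t => q (2 * t₁ - t)) (-(q' (2 * t₁ - t))) t := fun t => by
    simpa [Function.comp_def] using (hq (2 * t₁ - t)).scomp t (hu t)
  have hq'r : ∀ t, HasDerivAt (fun t => q' (2 * t₁ - t))
      (-(cfun (q (2 * t₁ - t)) • q (2 * t₁ - t))) t := fun t => by
    simpa [hcfun, Function.comp_def] using (hq' (2 * t₁ - t)).scomp t (hu t)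
  have hSneg : ∀ y : ℝ × ℝ, S (-y) = -S y := fun y => by
    have := hSsmul (-1) y; simpa using this
  have hFd : ∀ t, HasDerivAt F (v (F t)) t := fun t => (hq t).prodMk (hq' t)
  have hGd : ∀ t, HasDerivAt G (v (G t)) t := by
    intro t
    have hg1 : HasDerivAt (fun t => S (q (2 * t₁ - t))) (-(S (q' (2 * t₁ - t)))) t := by
      have := hSderiv _ _ t (hqr t)
      rwa [hSneg] at this
    have hg2 : HasDerivAt (fun t => -(S (q' (2 * t₁ - t))))
        (cfun (S (q (2 * t₁ - t))) • S (q (2 * t₁ - t))) t := by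
      have := (hSderiv _ _ t (hq'r t)).neg
      rw [hSneg, neg_neg, hSsmul] at this
      have hcc : cfun (q (2 * t₁ - t)) = cfun (S (q (2 * t₁ - t))) := by
        simp only [hcfun]; rw [hSnorm]
      rwa [hcc] at this
    exact hg1.prodMk hg2
  have heq : F t₁ = G t₁ := by
    have e1 : S a = a := by
      simp only [hS, Prod.smul_def, smul_eq_mul]
      apply Prod.ext <;> · simp only [hdd] at hd ⊢; field_simp; simp only [Prod.fst_sub, Prod.snd_sub]; ring
    have e2 : S (q' t₁) = -q' t₁ := by
      simp only [hS, Prod.smul_def, smul_eq_mul]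
      apply Prod.ext <;>
      · simp only [Prod.fst_sub, Prod.snd_sub, Prod.fst_neg, Prod.snd_neg]
        rw [show (q' t₁).1 * a.1 + (q' t₁).2 * a.2 = 0 by rw [ha]; linarith [horth]]
        simp
    simp only [hF, hG]
    rw [show 2 * t₁ - t₁ = t₁ by ring, ← ha, e1, e2, neg_neg]
  have key : ∀ t, F t = G t := ode_unique_global hvlip hFd hGd heq
  intro t
  have h := congrArg Prod.fst (key (2 * t₁ - t))
  simp only [hF, hG] at h
  rw [show 2 * t₁ - (2 * t₁ - t) = t by ring] at h
  rw [h]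
end
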